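/- arXiv:1705.01220 — 2 statements merged into one kernel-verified Lean document; each statement's English description precedes it below -/
import Mathlib

section
/- If D is a nonempty compact convex subset of ℝⁿ whose support function h_D is C² on ℝⁿ∖{0}, and t > 0, then the support function of the Minkowski sum D + t·Bⁿ restricted to ℝⁿ∖{0} has positive definite restriction of its Hessian to directions tangent to the sphere; in particular, its gradient restricted to S^{n-1} is an immersion. -/
open Metric MeasureTheory Set TopologicalSpace
open scoped RealInnerProductSpace Pointwise

/-- The support function of a set `D ⊆ ℝⁿ`: `h_D(v) = sup {⟨x, v⟩ : x ∈ D}`. -/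
noncomputable def suppFn {n : ℕ} (D : Set (EuclideanSpace ℝ (Fin n)))
    (v : EuclideanSpace ℝ (Fin n)) : ℝ :=
  sSup ((fun x => ⟪x, v⟫) '' D)

open Filter Topology

/-! Since `h_{D + tBⁿ} = h_D + t‖·‖`, the Hessian at `x ≠ 0` splits as that of the convex
function `h_D`, which is positive semidefinite, plus `t` times that of the norm, which on a
vector `v ⊥ x` equals `t ‖v‖² / ‖x‖ > 0`. Pairing `D(∇h_{D+tBⁿ})(u) v` with `v` gives this Hessian
value, so the differential of the gradient is injective on the tangent space of the sphere. -/

section NormHessian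

variable {E : Type*} [NormedAddCommGroup E] [InnerProductSpace ℝ E]

theorem hasFDerivAt_norm {x : E} (hx : x ≠ 0) :
    HasFDerivAt (‖·‖) (‖x‖⁻¹ • innerSL ℝ x) x := by
  have hx' : ‖x‖ ^ 2 ≠ 0 := by positivity
  convert (hasStrictFDerivAt_norm_sq x).hasFDerivAt.sqrt hx' using 1
  · simp [Real.sqrt_sq (norm_nonneg _)]
  · rw [Real.sqrt_sq (norm_nonneg _)]
    module

theorem fderiv_fderiv_norm_apply {x : E} (hx : x ≠ 0) (v w : E) :
    fderiv ℝ (fderiv ℝ (‖·‖)) x v w = (⟪v, w⟫ - ⟪x, v⟫ * ⟪x, w⟫ / ‖x‖ ^ 2) / ‖x‖ := by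
  have hfd : fderiv ℝ (‖·‖) =ᶠ[𝓝 x] fun y : E => ‖y‖⁻¹ • innerSL ℝ y :=
    eventually_of_mem (isOpen_compl_singleton.mem_nhds hx) fun y hy =>
      (hasFDerivAt_norm hy).fderiv
  have hinv : HasFDerivAt (fun y : E => ‖y‖⁻¹) (-(‖x‖ ^ 2)⁻¹ • ‖x‖⁻¹ • innerSL ℝ x) x :=
    (hasDerivAt_inv (norm_ne_zero_iff.2 hx)).comp_hasFDerivAt x (hasFDerivAt_norm hx)
  have hd : HasFDerivAt (fun y : E => ‖y‖⁻¹ • innerSL ℝ y) _ x :=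
    hinv.smul (innerSL ℝ).hasFDerivAt
  rw [hfd.fderiv_eq, hd.fderiv]
  simp only [add_apply, smul_apply, ContinuousLinearMap.smulRight_apply, smul_eq_mul]
  rw [innerSL_apply_apply, innerSL_apply_apply, innerSL_apply_apply]
  ring

end NormHessian

section SecondDerivative

variable {𝕜 : Type*} [NontriviallyNormedField 𝕜] {E F : Type*} [NormedAddCommGroup E]
  [NormedSpace 𝕜 E] [NormedAddCommGroup F] [NormedSpace 𝕜 F]

theorem fderiv_fderiv_add_const_smul_apply {f g : E → F} {x : E} (hf : ContDiffAt 𝕜 2 f x)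
    (hg : ContDiffAt 𝕜 2 g x) (c : 𝕜) (v w : E) :
    fderiv 𝕜 (fderiv 𝕜 (f + c • g)) x v w
      = fderiv 𝕜 (fderiv 𝕜 f) x v w + c • fderiv 𝕜 (fderiv 𝕜 g) x v w := by
  have h := iteratedFDeriv_two_apply (𝕜 := 𝕜) (f + c • g) x ![v, w]
  rw [iteratedFDeriv_add_apply (g := c • g) hf (hg.const_smul c),
    iteratedFDeriv_const_smul_apply hg] at h
  simpa [iteratedFDeriv_two_apply] using h.symm

end SecondDerivative

theorem inner_fderiv_gradient_apply {E : Type*} [NormedAddCommGroup E] [InnerProductSpace ℝ E]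
    [CompleteSpace E] (f : E → ℝ) (x v w : E) :
    ⟪fderiv ℝ (gradient f) x v, w⟫ = fderiv ℝ (fderiv ℝ f) x v w := by
  change ⟪fderiv ℝ ((InnerProductSpace.toDual ℝ E).symm ∘ fderiv ℝ f) x v, w⟫ = _
  rw [LinearIsometryEquiv.comp_fderiv]
  exact InnerProductSpace.toDual_symm_apply

section Convex

variable {E : Type*} [NormedAddCommGroup E] [NormedSpace ℝ E]

theorem ConvexOn.nonneg_of_hasDerivAt_deriv {φ : ℝ → ℝ} {S : Set ℝ} {a c : ℝ}
    (hφ : ConvexOn ℝ S φ) (hS : S ∈ 𝓝 a) (hdiff : ∀ᶠ s in 𝓝 a, DifferentiableAt ℝ φ s)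
    (h : HasDerivAt (deriv φ) c a) : 0 ≤ c := by
  obtain ⟨ε, hε, hball⟩ := Metric.mem_nhds_iff.1 (inter_mem hS hdiff)
  have hmono : MonotoneOn (deriv φ) (ball a ε) :=
    (hφ.subset (fun s hs => (hball hs).1) (convex_ball a ε)).monotoneOn_deriv
      fun s hs => (hball hs).2
  rw [← h.deriv, ← derivWithin_of_mem_nhds (ball_mem_nhds a hε)]
  exact hmono.derivWithin_nonneg

theorem ConvexOn.fderiv_fderiv_apply_self_nonneg {f : E → ℝ} {U : Set E} {x : E}
    (hf : ConvexOn ℝ U f) (hU : U ∈ 𝓝 x) (hf2 : ContDiffAt ℝ 2 f x) (v : E) :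
    0 ≤ fderiv ℝ (fderiv ℝ f) x v v := by
  set L : ℝ →ᵃ[ℝ] E := AffineMap.lineMap x (x + v)
  have hL : ∀ s : ℝ, L s = x + s • v := fun s => by
    simp [L, AffineMap.lineMap_apply, add_comm]
  have hLderiv : ∀ s : ℝ, HasDerivAt L v s := fun s => by
    rw [show (L : ℝ → E) = fun s => x + s • v from funext hL]
    simpa using ((hasDerivAt_id s).smul_const v).const_add x
  have hLx : Tendsto L (𝓝 0) (𝓝 x) := by
    simpa [hL] using L.continuous_of_finiteDimensional.tendsto 0
  have hdiff : ∀ᶠ s in 𝓝 (0 : ℝ), HasDerivAt (f ∘ L) (fderiv ℝ f (L s) v) s :=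
    hLx.eventually ((hf2.eventually (by simp)).mono fun y hy =>
      (hy.differentiableAt two_ne_zero).hasFDerivAt) |>.mono fun s hs =>
        hs.comp_hasDerivAt s (hLderiv s)
  have hψ : HasDerivAt (fun s => fderiv ℝ f (L s) v) (fderiv ℝ (fderiv ℝ f) x v v) 0 := by
    have h1 := (hf2.fderiv_right (m := 1) le_rfl).differentiableAt one_ne_zero
    exact (ContinuousLinearMap.apply ℝ ℝ v).hasFDerivAt.comp_hasDerivAt 0
      (h1.hasFDerivAt.comp_hasDerivAt_of_eq 0 (hLderiv 0) (by simp [hL]))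
  refine (hf.comp_affineMap L).nonneg_of_hasDerivAt_deriv (hLx hU)
    (hdiff.mono fun s hs => hs.differentiableAt) (hψ.congr_of_eventuallyEq ?_)
  exact hdiff.mono fun s hs => hs.deriv

end Convex

section SupportFunction

theorem Bornology.IsBounded.bddAbove_inner_image {E : Type*} [NormedAddCommGroup E]
    [InnerProductSpace ℝ E] {D : Set E} (hD : Bornology.IsBounded D) (v : E) :
    BddAbove ((fun x => ⟪x, v⟫) '' D) := by
  obtain ⟨R, hR⟩ := hD.subset_closedBall 0
  refine ⟨R * ‖v‖, ?_⟩
  rintro _ ⟨x, hx, rfl⟩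
  calc ⟪x, v⟫ ≤ ‖x‖ * ‖v‖ := real_inner_le_norm x v
    _ ≤ R * ‖v‖ := by gcongr; simpa using hR hx

variable {n : ℕ} {A B D : Set (EuclideanSpace ℝ (Fin n))}

theorem inner_le_suppFn (hD : Bornology.IsBounded D) {x : EuclideanSpace ℝ (Fin n)} (hx : x ∈ D)
    (v : EuclideanSpace ℝ (Fin n)) : ⟪x, v⟫ ≤ suppFn D v :=
  le_csSup (hD.bddAbove_inner_image v) (mem_image_of_mem _ hx)

theorem suppFn_convexOn (hne : D.Nonempty) (hD : Bornology.IsBounded D) :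
    ConvexOn ℝ univ (suppFn D) := by
  refine ⟨convex_univ, fun u _ w _ a b ha hb _ => csSup_le (hne.image _) ?_⟩
  rintro _ ⟨z, hz, rfl⟩
  calc ⟪z, a • u + b • w⟫ = a * ⟪z, u⟫ + b * ⟪z, w⟫ := by
        rw [inner_add_right, real_inner_smul_right, real_inner_smul_right]
    _ ≤ a * suppFn D u + b * suppFn D w := by
        gcongr <;> exact inner_le_suppFn hD hz _

theorem suppFn_add (hA : A.Nonempty) (hA' : Bornology.IsBounded A) (hB : B.Nonempty)
    (hB' : Bornology.IsBounded B) : suppFn (A + B) = suppFn A + suppFn B := by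
  funext v
  have hv : (fun x : EuclideanSpace ℝ (Fin n) => ⟪x, v⟫) = innerSL ℝ v :=
    funext fun x => real_inner_comm v x
  simp only [suppFn, Pi.add_apply, hv, Set.image_add]
  rw [← hv]
  exact csSup_add (hA.image _) (hA'.bddAbove_inner_image v) (hB.image _)
    (hB'.bddAbove_inner_image v)

theorem suppFn_closedBall_zero {r : ℝ} (hr : 0 ≤ r) (v : EuclideanSpace ℝ (Fin n)) :
    suppFn (closedBall 0 r) v = r * ‖v‖ := by
  rcases eq_or_ne v 0 with rfl | hv
  · simp [suppFn, (nonempty_closedBall.2 hr).image_const]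
  refine IsGreatest.csSup_eq ⟨⟨(r / ‖v‖) • v, ?_, ?_⟩, ?_⟩
  · simp [norm_smul, abs_of_nonneg hr, hv]
  · simp [real_inner_smul_left]
    field_simp
  · rintro _ ⟨x, hx, rfl⟩
    calc ⟪x, v⟫ ≤ ‖x‖ * ‖v‖ := real_inner_le_norm x v
      _ ≤ r * ‖v‖ := by gcongr; simpa using hx

theorem suppFn_add_smul_closedBall (hne : D.Nonempty) (hD : Bornology.IsBounded D) {t : ℝ}
    (ht : 0 ≤ t) : suppFn (D + t • closedBall 0 1) = suppFn D + t • (‖·‖) := by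
  rw [_root_.smul_closedBall _ _ zero_le_one, smul_zero, Real.norm_of_nonneg ht, mul_one,
    suppFn_add hne hD ⟨0, mem_closedBall_self ht⟩ isBounded_closedBall]
  funext v
  simp [suppFn_closedBall_zero ht]

end SupportFunction

theorem suppFn_add_ball_hessian_posdef_general (n : ℕ) (D : Set (EuclideanSpace ℝ (Fin n)))
    (hne : D.Nonempty) (hcomp : IsCompact D)
    (hC2 : ContDiffOn ℝ 2 (suppFn D) {(0 : EuclideanSpace ℝ (Fin n))}ᶜ)
    (t : ℝ) (ht : 0 < t) :
    (∀ x : EuclideanSpace ℝ (Fin n), x ≠ 0 →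
      ∀ v : EuclideanSpace ℝ (Fin n), v ≠ 0 → ⟪v, x⟫ = 0 →
        0 < fderiv ℝ (fderiv ℝ (suppFn (D + t • closedBall (0 : EuclideanSpace ℝ (Fin n)) 1)))
              x v v) ∧
    (∀ u : EuclideanSpace ℝ (Fin n), ‖u‖ = 1 →
      ∀ v : EuclideanSpace ℝ (Fin n), v ≠ 0 → ⟪v, u⟫ = 0 →
        fderiv ℝ (gradient (suppFn (D + t • closedBall (0 : EuclideanSpace ℝ (Fin n)) 1)))
            u v ≠ 0) := by
  rw [suppFn_add_smul_closedBall hne hcomp.isBounded ht.le]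
  have hessian_pos : ∀ x : EuclideanSpace ℝ (Fin n), x ≠ 0 →
      ∀ v : EuclideanSpace ℝ (Fin n), v ≠ 0 → ⟪v, x⟫ = 0 →
        0 < fderiv ℝ (fderiv ℝ (suppFn D + t • (‖·‖))) x v v := by
    intro x hx v hv hvx
    have hD2 : ContDiffAt ℝ 2 (suppFn D) x :=
      hC2.contDiffAt (isOpen_compl_singleton.mem_nhds hx)
    have hD_nonneg := (suppFn_convexOn hne hcomp.isBounded).fderiv_fderiv_apply_self_nonneg
      univ_mem hD2 v
    rw [fderiv_fderiv_add_const_smul_apply hD2 (contDiffAt_norm ℝ hx),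
      fderiv_fderiv_norm_apply hx, real_inner_comm v x, hvx, real_inner_self_eq_norm_sq,
      zero_mul, zero_div, sub_zero, smul_eq_mul]
    exact add_pos_of_nonneg_of_pos hD_nonneg
      (mul_pos ht (div_pos (pow_pos (norm_pos_iff.2 hv) 2) (norm_pos_iff.2 hx)))
  refine ⟨hessian_pos, fun u hu v hv hvu hzero => ?_⟩
  have hu0 : u ≠ 0 := by rintro rfl; simp at hu
  have := inner_fderiv_gradient_apply (suppFn D + t • (‖·‖)) u v v
  rw [hzero, inner_zero_left] at this
  exact (hessian_pos u hu0 v hv hvu).ne this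

/-- if `h_D` is `C²` away from the origin and `t > 0`, then the Hessian of the
support function of `D + t Bⁿ` is positive definite on directions tangent to the sphere;
in particular, its gradient restricted to the unit sphere is an immersion. -/
theorem suppFn_add_ball_hessian_posdef (n : ℕ) (D : Set (EuclideanSpace ℝ (Fin n)))
    (hne : D.Nonempty) (hcomp : IsCompact D) (hconv : Convex ℝ D)
    (hC2 : ContDiffOn ℝ 2 (suppFn D) {(0 : EuclideanSpace ℝ (Fin n))}ᶜ)
    (t : ℝ) (ht : 0 < t) :
    (∀ x : EuclideanSpace ℝ (Fin n), x ≠ 0 →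
      ∀ v : EuclideanSpace ℝ (Fin n), v ≠ 0 → ⟪v, x⟫ = 0 →
        0 < fderiv ℝ (fderiv ℝ (suppFn (D + t • closedBall (0 : EuclideanSpace ℝ (Fin n)) 1)))
              x v v) ∧
    (∀ u : EuclideanSpace ℝ (Fin n), ‖u‖ = 1 →
      ∀ v : EuclideanSpace ℝ (Fin n), v ≠ 0 → ⟪v, u⟫ = 0 →
        fderiv ℝ (gradient (suppFn (D + t • closedBall (0 : EuclideanSpace ℝ (Fin n)) 1)))
            u v ≠ 0) :=
  suppFn_add_ball_hessian_posdef_general n D hne hcomp hC2 t ht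
end

section
/- For a nonempty compact convex set K ⊆ ℝⁿ, u ∈ S^{n-1}, and ε ≥ 0, define the truncation K_{u,ε} = {x ∈ K : ⟨x,u⟩ ≤ h_K(u) − ε}. If 0 ≤ ε < h_K(u) + h_K(−u) then K_{u,ε} is a nonempty compact convex set, and the map (K,ε) ↦ K_{u,ε} is continuous in the Hausdorff metric on the set where ε < h_K(u) + h_K(−u). -/
open Metric MeasureTheory Set TopologicalSpace
open scoped RealInnerProductSpace Pointwise

open Bornology

/-!
Both truncations are sublevel sets `{x ∈ S | ⟪x, u⟫ ≤ t}` of convex bodies. Support functions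
and levels move by `O(δ)` when `d_H(K, K') < δ` and `|ε - ε'| < δ`, so a point of one truncation
is `δ`-close to a point of the other body lying at most `3δ` above the other level. The condition
`ε < h_K(u) + h_K(-u)` leaves a point `p` of the body a fixed margin `c` below the level, and
sliding towards `p` inside the convex body returns to the level after moving at most a
`3δ / c` fraction of the diameter.
-/

lemma diam_le_diam_add_of_hausdorffDist_lt {α : Type*} [PseudoMetricSpace α] {s t : Set α}
    {r : ℝ} (hs : IsBounded s) (hfin : hausdorffEDist s t ≠ ⊤)
    (hd : hausdorffDist s t < r) : diam t ≤ diam s + 2 * r := by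
  have hr : 0 < r := hausdorffDist_nonneg.trans_lt hd
  refine diam_le_of_forall_dist_le (by positivity) fun x hx y hy => ?_
  obtain ⟨x₀, hx₀, hxx₀⟩ := exists_dist_lt_of_hausdorffDist_lt' hx hd hfin
  obtain ⟨y₀, hy₀, hyy₀⟩ := exists_dist_lt_of_hausdorffDist_lt' hy hd hfin
  calc dist x y ≤ dist x x₀ + dist x₀ y₀ + dist y₀ y := dist_triangle4 _ _ _ _
    _ ≤ r + diam s + r := by
      rw [dist_comm x]
      exact add_le_add (add_le_add hxx₀.le (dist_le_diam_of_mem hs hx₀ hy₀)) hyy₀.le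
    _ = diam s + 2 * r := by ring

section Sublevel

variable {F : Type*} [NormedAddCommGroup F] [InnerProductSpace ℝ F] {u : F}

lemma inner_le_inner_add_dist (hu : ‖u‖ = 1) (x y : F) : ⟪y, u⟫ ≤ ⟪x, u⟫ + dist x y := by
  have h := real_inner_le_norm (y - x) u
  rw [inner_sub_left, hu, mul_one, ← dist_eq_norm, dist_comm] at h
  linarith

lemma Convex.exists_inner_le_dist_le {S : Set F} (hS : Convex ℝ S) {y p : F} (hy : y ∈ S)
    (hp : p ∈ S) {t c s : ℝ} (hc : 0 < c) (hpt : ⟪p, u⟫ + c ≤ t) (hs : 0 ≤ s)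
    (hyt : ⟪y, u⟫ ≤ t + s) : ∃ z ∈ S, ⟪z, u⟫ ≤ t ∧ dist y z ≤ s / c * dist y p := by
  rcases le_or_gt ⟪y, u⟫ t with hle | hgt
  · exact ⟨y, hy, hle, by rw [dist_self]; positivity⟩
  have hgap : 0 < ⟪y, u⟫ - ⟪p, u⟫ := by linarith
  set l := (⟪y, u⟫ - t) / (⟪y, u⟫ - ⟪p, u⟫)
  have hl0 : 0 ≤ l := div_nonneg (by linarith) hgap.le
  have hl1 : l ≤ 1 := (div_le_one hgap).2 (by linarith)
  have hls : l ≤ s / c := div_le_div₀ hs (by linarith) hc (by linarith)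
  have hlgap : l * (⟪y, u⟫ - ⟪p, u⟫) = ⟪y, u⟫ - t := div_mul_cancel₀ _ hgap.ne'
  refine ⟨AffineMap.lineMap y p l, hS.lineMap_mem hy hp ⟨hl0, hl1⟩, ?_, ?_⟩
  · rw [AffineMap.lineMap_apply_module, inner_add_left, real_inner_smul_left,
      real_inner_smul_left]
    exact le_of_eq (by linear_combination -hlgap)
  · rw [dist_left_lineMap, Real.norm_of_nonneg hl0]
    exact mul_le_mul_of_nonneg_right hls dist_nonneg

lemma Convex.exists_inner_le_dist_le_of_dist_le {S : Set F} (hS : Convex ℝ S)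
    (hb : IsBounded S) (hu : ‖u‖ = 1) {x y p : F} {t t' δ c : ℝ} (hxt : ⟪x, u⟫ ≤ t)
    (hy : y ∈ S) (hxy : dist x y ≤ δ) (hp : p ∈ S) (hc : 0 < c) (hpt : ⟪p, u⟫ + c ≤ t')
    (htt : t ≤ t' + 2 * δ) :
    ∃ z ∈ S, ⟪z, u⟫ ≤ t' ∧ dist x z ≤ δ + 3 * δ / c * diam S := by
  have hδ : 0 ≤ δ := dist_nonneg.trans hxy
  have hyt : ⟪y, u⟫ ≤ t' + 3 * δ := by linarith [inner_le_inner_add_dist hu x y]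
  obtain ⟨z, hz, hzt, hyz⟩ := hS.exists_inner_le_dist_le hy hp hc hpt (by positivity) hyt
  refine ⟨z, hz, hzt, ?_⟩
  calc dist x z ≤ dist x y + dist y z := dist_triangle _ _ _
    _ ≤ δ + 3 * δ / c * diam S := by
      gcongr
      exact hyz.trans (by gcongr; exact dist_le_diam_of_mem hb hy hp)

lemma hausdorffDist_sublevel_le {S S' : Set F} (hS : Convex ℝ S) (hS' : Convex ℝ S')
    (hb : IsBounded S) (hb' : IsBounded S') (hu : ‖u‖ = 1) {δ c t t' D : ℝ}
    (hd : hausdorffDist S S' < δ) (hfin : hausdorffEDist S S' ≠ ⊤) (hc : 0 < c)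
    {p p' : F} (hp : p ∈ S) (hpt : ⟪p, u⟫ + c ≤ t) (hp' : p' ∈ S') (hp't : ⟪p', u⟫ + c ≤ t')
    (htt : |t - t'| ≤ 2 * δ) (hD : diam S ≤ D) (hD' : diam S' ≤ D) :
    hausdorffDist {x ∈ S | ⟪x, u⟫ ≤ t} {x ∈ S' | ⟪x, u⟫ ≤ t'} ≤ δ + 3 * δ / c * D := by
  have hδ : 0 ≤ δ := hausdorffDist_nonneg.trans hd.le
  have hD0 : 0 ≤ D := diam_nonneg.trans hD
  obtain ⟨htt₁, htt₂⟩ := abs_le.1 htt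
  refine hausdorffDist_le_of_mem_dist (by positivity) ?_ ?_
  · rintro x ⟨hx, hxt⟩
    obtain ⟨y, hy, hxy⟩ := exists_dist_lt_of_hausdorffDist_lt hx hd hfin
    obtain ⟨z, hz, hzt, hxz⟩ := hS'.exists_inner_le_dist_le_of_dist_le hb' hu hxt hy hxy.le
      hp' hc hp't (by linarith)
    exact ⟨z, ⟨hz, hzt⟩, hxz.trans (by gcongr)⟩
  · rintro x ⟨hx, hxt⟩
    obtain ⟨y, hy, hxy⟩ := exists_dist_lt_of_hausdorffDist_lt' hx hd hfin
    obtain ⟨z, hz, hzt, hxz⟩ := hS.exists_inner_le_dist_le_of_dist_le hb hu hxt hy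
      ((dist_comm x y).trans_lt hxy).le hp hc hpt (by linarith)
    exact ⟨z, ⟨hz, hzt⟩, hxz.trans (by gcongr)⟩

end Sublevel

section SupportFunction

variable {n : ℕ}
local notation "E" => EuclideanSpace ℝ (Fin n)

lemma inner_le_suppFn_s13 {K : Set E} (hK : IsCompact K) {x : E} (hx : x ∈ K) (v : E) :
    ⟪x, v⟫ ≤ suppFn K v :=
  le_csSup (hK.image (f := fun x : E => ⟪x, v⟫) (by fun_prop)).bddAbove
    (mem_image_of_mem _ hx)

lemma suppFn_le {K : Set E} (hne : K.Nonempty) {v : E} {a : ℝ} (h : ∀ x ∈ K, ⟪x, v⟫ ≤ a) :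
    suppFn K v ≤ a :=
  csSup_le (hne.image _) (forall_mem_image.2 h)

lemma IsCompact.exists_inner_eq_suppFn {K : Set E} (hK : IsCompact K) (hne : K.Nonempty)
    (v : E) : ∃ x ∈ K, ⟪x, v⟫ = suppFn K v := by
  obtain ⟨x, hx, hmax⟩ :=
    hK.exists_isMaxOn hne (f := fun x : E => ⟪x, v⟫) (by fun_prop)
  exact ⟨x, hx, le_antisymm (inner_le_suppFn_s13 hK hx v) (suppFn_le hne hmax)⟩

lemma IsCompact.exists_inner_eq_neg_suppFn_neg {K : Set E} (hK : IsCompact K)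
    (hne : K.Nonempty) (u : E) : ∃ p ∈ K, ⟪p, u⟫ = -suppFn K (-u) := by
  obtain ⟨p, hp, hpu⟩ := hK.exists_inner_eq_suppFn hne (-u)
  exact ⟨p, hp, by rw [← hpu, inner_neg_right, neg_neg]⟩

lemma suppFn_le_suppFn_add_hausdorffDist {K K' : Set E} (hK' : IsCompact K')
    (hne : K.Nonempty) (hne' : K'.Nonempty) (hfin : hausdorffEDist K K' ≠ ⊤) {v : E}
    (hv : ‖v‖ = 1) : suppFn K v ≤ suppFn K' v + hausdorffDist K K' := by
  refine suppFn_le hne fun x hx => ?_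
  obtain ⟨y, hy, hxy⟩ := hK'.exists_infDist_eq_dist hne' x
  calc ⟪x, v⟫ ≤ ⟪y, v⟫ + dist y x := inner_le_inner_add_dist hv y x
    _ ≤ suppFn K' v + hausdorffDist K K' := by
      rw [dist_comm, ← hxy]
      exact add_le_add (inner_le_suppFn_s13 hK' hy v) (infDist_le_hausdorffDist_of_mem hx hfin)

lemma abs_suppFn_sub_suppFn_le {K K' : Set E} (hK : IsCompact K) (hK' : IsCompact K')
    (hne : K.Nonempty) (hne' : K'.Nonempty) {v : E} (hv : ‖v‖ = 1) :
    |suppFn K v - suppFn K' v| ≤ hausdorffDist K K' := by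
  have hfin := hausdorffEDist_ne_top_of_nonempty_of_bounded hne hne' hK.isBounded hK'.isBounded
  have hfin' := hausdorffEDist_ne_top_of_nonempty_of_bounded hne' hne hK'.isBounded hK.isBounded
  have h₁ := suppFn_le_suppFn_add_hausdorffDist hK' hne hne' hfin hv
  have h₂ := suppFn_le_suppFn_add_hausdorffDist hK hne' hne hfin' hv
  rw [hausdorffDist_comm] at h₂
  exact abs_sub_le_iff.2 ⟨by linarith, by linarith⟩

def truncation (K : Set E) (u : E) (ε : ℝ) : Set E := {x ∈ K | ⟪x, u⟫ ≤ suppFn K u - ε}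

lemma truncation_nonempty {K : Set E} (hK : IsCompact K) (hne : K.Nonempty) {u : E} {ε : ℝ}
    (hw : ε ≤ suppFn K u + suppFn K (-u)) : (truncation K u ε).Nonempty := by
  obtain ⟨p, hp, hpu⟩ := hK.exists_inner_eq_neg_suppFn_neg hne u
  exact ⟨p, hp, by linarith⟩

lemma IsCompact.truncation {K : Set E} (hK : IsCompact K) (u : E) (ε : ℝ) :
    IsCompact (truncation K u ε) :=
  hK.inter_right (isClosed_le (f := fun x : E => ⟪x, u⟫) (by fun_prop) continuous_const)

lemma Convex.truncation {K : Set E} (hK : Convex ℝ K) (u : E) (ε : ℝ) :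
    Convex ℝ (truncation K u ε) :=
  hK.inter (convex_halfSpace_le ((innerₗ E).flip u).isLinear _)

theorem exists_hausdorffDist_truncation_lt {K : Set E} (hne : K.Nonempty) (hK : IsCompact K)
    (hconv : Convex ℝ K) {u : E} (hu : ‖u‖ = 1) {ε : ℝ}
    (hw : ε < suppFn K u + suppFn K (-u)) {η : ℝ} (hη : 0 < η) :
    ∃ δ > 0, ∀ (K' : Set E) (ε' : ℝ), K'.Nonempty → IsCompact K' → Convex ℝ K' →
      hausdorffDist K K' < δ → |ε - ε'| < δ →
        hausdorffDist (truncation K u ε) (truncation K' u ε') < η := by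
  -- `K'` keeps margin `c` below its level once `δ ≤ c / 3`, and `diam K' ≤ D` once `δ ≤ 1`.
  set c := (suppFn K u + suppFn K (-u) - ε) / 2 with hc_def
  set D := diam K + 2 with hD_def
  set B := 1 + 3 / c * D
  have hc : 0 < c := by linarith
  have hB : 0 < B := by have := diam_nonneg (s := K); positivity
  refine ⟨min (min (c / 3) 1) (η / (2 * B)), by positivity,
    fun K' ε' hne' hK' hconv' hd hε => ?_⟩
  set δ := min (min (c / 3) 1) (η / (2 * B))
  have hδc : δ ≤ c / 3 := (min_le_left _ _).trans (min_le_left _ _)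
  have hδ1 : δ ≤ 1 := (min_le_left _ _).trans (min_le_right _ _)
  have hfin := hausdorffEDist_ne_top_of_nonempty_of_bounded hne hne' hK.isBounded hK'.isBounded
  have hsu := abs_le.1 ((abs_suppFn_sub_suppFn_le hK hK' hne hne' hu).trans hd.le)
  have hsu' := abs_le.1
    ((abs_suppFn_sub_suppFn_le hK hK' hne hne' (by rwa [norm_neg])).trans hd.le)
  have hεε := abs_lt.1 hε
  obtain ⟨p, hp, hpu⟩ := hK.exists_inner_eq_neg_suppFn_neg hne u
  obtain ⟨p', hp', hp'u⟩ := hK'.exists_inner_eq_neg_suppFn_neg hne' u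
  have key := hausdorffDist_sublevel_le (t := suppFn K u - ε) (t' := suppFn K' u - ε') (D := D)
    hconv hconv' hK.isBounded hK'.isBounded hu hd hfin hc hp (by linarith) hp' (by linarith)
    (abs_le.2 ⟨by linarith, by linarith⟩) (by linarith)
    ((diam_le_diam_add_of_hausdorffDist_lt hK.isBounded hfin hd).trans (by linarith))
  calc _ ≤ δ + 3 * δ / c * D := key
    _ = δ * B := by ring
    _ ≤ η / (2 * B) * B := by gcongr; exact min_le_right _ _
    _ < η := by field_simp; linarith

end SupportFunction

/-- for `0 ≤ ε < h_K(u) + h_K(-u)` the truncation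
`K_{u,ε} = {x ∈ K : ⟨x,u⟩ ≤ h_K(u) - ε}` is a nonempty compact convex set, and
`(K, ε) ↦ K_{u,ε}` is continuous in the Hausdorff metric on this domain. -/
theorem truncation_wellDefined_and_continuous (n : ℕ) (u : EuclideanSpace ℝ (Fin n))
    (hu : ‖u‖ = 1) :
    (∀ K : Set (EuclideanSpace ℝ (Fin n)), K.Nonempty → IsCompact K → Convex ℝ K →
      ∀ ε : ℝ, 0 ≤ ε → ε < suppFn K u + suppFn K (-u) →
        ({x ∈ K | ⟪x, u⟫ ≤ suppFn K u - ε}).Nonempty ∧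
        IsCompact {x ∈ K | ⟪x, u⟫ ≤ suppFn K u - ε} ∧
        Convex ℝ {x ∈ K | ⟪x, u⟫ ≤ suppFn K u - ε}) ∧
    (∀ K : Set (EuclideanSpace ℝ (Fin n)), K.Nonempty → IsCompact K → Convex ℝ K →
      ∀ ε : ℝ, 0 ≤ ε → ε < suppFn K u + suppFn K (-u) →
      ∀ η : ℝ, 0 < η → ∃ δ : ℝ, 0 < δ ∧
        ∀ K' : Set (EuclideanSpace ℝ (Fin n)), K'.Nonempty → IsCompact K' → Convex ℝ K' →
        ∀ ε' : ℝ, 0 ≤ ε' → ε' < suppFn K' u + suppFn K' (-u) →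
          hausdorffDist K K' < δ → |ε - ε'| < δ →
            hausdorffDist {x ∈ K | ⟪x, u⟫ ≤ suppFn K u - ε}
              {x ∈ K' | ⟪x, u⟫ ≤ suppFn K' u - ε'} < η) := by
  refine ⟨fun K hne hK hconv ε _ hw =>
    ⟨truncation_nonempty hK hne hw.le, hK.truncation u ε, hconv.truncation u ε⟩, ?_⟩
  intro K hne hK hconv ε _ hw η hη
  obtain ⟨δ, hδ, hδK⟩ := exists_hausdorffDist_truncation_lt hne hK hconv hu hw hη
  exact ⟨δ, hδ, fun K' hne' hK' hconv' ε' _ _ => hδK K' ε' hne' hK' hconv'⟩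
end
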